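/- arXiv:2204.10758 — 8 statements merged into one kernel-verified Lean document; each statement's English description precedes it below -/
import Mathlib

section
/- Let V be an abelian group and G a subgroup of V. There do not exist sequences (cᵢ)_{i∈ℕ} and (dⱼ)_{j∈ℕ} of elements of V such that for all i, j ∈ ℕ, cᵢ − dⱼ ∈ G if and only if i < j. -/
theorem stmt1 {V : Type*} [AddCommGroup V] (G : AddSubgroup V) :
    ¬ ∃ (c d : ℕ → V), ∀ i j : ℕ, (c i - d j ∈ G ↔ i < j) := by
  rintro ⟨c, d, h⟩
  have h01 : c 0 - d 1 ∈ G := (h 0 1).mpr (by norm_num)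
  have h02 : c 0 - d 2 ∈ G := (h 0 2).mpr (by norm_num)
  have h12 : c 1 - d 2 ∈ G := (h 1 2).mpr (by norm_num)
  have : c 1 - d 1 ∈ G := by
    have := add_mem (sub_mem h12 h02) h01
    convert this using 1
    abel
  exact absurd ((h 1 1).mp this) (lt_irrefl 1)
end

section
/- Let F be a field, R a subring of F with fraction field K = Frac(R) (viewed inside F), V an F-vector space, and G an R-submodule of V satisfying: whenever λ₁,…,λₙ ∈ F are linearly independent over K and g₁,…,gₙ ∈ G with λ₁g₁ + ⋯ + λₙgₙ = 0, then g₁ = ⋯ = gₙ = 0. Then for any λ₁,…,λₙ ∈ F there exist finitely many vectors r⁽¹⁾,…,r⁽ᵐ⁾ ∈ Rⁿ such that for all g₁,…,gₙ ∈ G: λ₁g₁ + ⋯ + λₙgₙ = 0 if and only if for every j ≤ m, r⁽ʲ⁾₁g₁ + ⋯ + r⁽ʲ⁾ₙgₙ = 0. -/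
set_option synthInstance.maxHeartbeats 1000000
set_option maxHeartbeats 1000000

theorem stmt2 {F V : Type*} [Field F] [AddCommGroup V] [Module F V]
    (R : Subring F) (K : Subfield F)
    (hK : ∀ x : F, x ∈ K ↔ ∃ r ∈ R, ∃ s ∈ R, s ≠ 0 ∧ x = r / s)
    (G : AddSubgroup V) (hGsmul : ∀ r ∈ R, ∀ g ∈ G, r • g ∈ G)
    (hB : ∀ (k : ℕ) (lam : Fin k → F) (g : Fin k → V),
      (∀ c : Fin k → F, (∀ i, c i ∈ K) → ∑ i, c i * lam i = 0 → ∀ i, c i = 0) →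
      (∀ i, g i ∈ G) → ∑ i, lam i • g i = 0 → ∀ i, g i = 0)
    (n : ℕ) (lam : Fin n → F) :
    ∃ (m : ℕ) (r : Fin m → Fin n → F), (∀ j i, r j i ∈ R) ∧
      ∀ g : Fin n → V, (∀ i, g i ∈ G) →
        (∑ i, lam i • g i = 0 ↔ ∀ j, ∑ i, r j i • g i = 0) := by
  classical
  set W : Submodule K F := Submodule.span K (Set.range lam) with hW
  haveI : FiniteDimensional K W := FiniteDimensional.span_of_finite K (Set.finite_range lam)
  set k : ℕ := Module.finrank K W with hk
  set b : Module.Basis (Fin k) K W := Module.finBasis K W with hb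
  set mu : Fin k → F := fun j => (b j : F) with hmu
  -- mu is K-linearly independent in the sense of hB
  have hmuind : ∀ c : Fin k → F, (∀ i, c i ∈ K) → ∑ i, c i * mu i = 0 → ∀ i, c i = 0 := by
    intro c hc hsum i
    have hli : LinearIndependent K mu := by
      have := b.linearIndependent
      exact this.map' W.subtype (Submodule.ker_subtype W)
    have h2 : ∑ j, (⟨c j, hc j⟩ : K) • mu j = 0 := by
      simpa [Subfield.smul_def] using hsum
    have := linearIndependent_iff'.mp hli Finset.univ (fun j => ⟨c j, hc j⟩) h2 i (Finset.mem_univ i)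
    exact congrArg Subtype.val this
  -- coordinates of lam in terms of mu
  set lamW : Fin n → W := fun i => ⟨lam i, Submodule.subset_span (Set.mem_range_self i)⟩ with hlamW
  set c : Fin n → Fin k → K := fun i j => b.repr (lamW i) j with hc
  have hrep : ∀ i, lam i = ∑ j, (c i j : F) * mu j := by
    intro i
    have h2 : ((∑ j, b.repr (lamW i) j • b j : W) : F) = lam i := by
      rw [b.sum_repr]
    rw [← h2]
    push_cast
    rfl
  -- common denominator
  choose p hp q hq hq0 hpq using fun ij : Fin n × Fin k => (hK (c ij.1 ij.2)).mp (c ij.1 ij.2).2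
  set s : F := ∏ ij : Fin n × Fin k, q ij with hs
  have hsR : s ∈ R := prod_mem (fun ij _ => hq ij)
  have hs0 : s ≠ 0 := Finset.prod_ne_zero_iff.mpr (fun ij _ => hq0 ij)
  set a : Fin n → Fin k → F := fun i j => s * (c i j : F) with ha
  have haR : ∀ i j, a i j ∈ R := by
    intro i j
    have hmem : (i, j) ∈ (Finset.univ : Finset (Fin n × Fin k)) := Finset.mem_univ _
    have hsplit : s = q (i, j) * ∏ ij ∈ Finset.univ.erase (i, j), q ij :=
      (Finset.mul_prod_erase _ _ hmem).symm
    have : a i j = (∏ ij ∈ Finset.univ.erase (i, j), q ij) * p (i, j) := by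
      rw [ha]
      simp only []
      rw [hpq (i, j), hsplit]
      field_simp [hq0 (i, j)]
    rw [this]
    exact R.mul_mem (prod_mem (fun ij _ => hq ij)) (hp (i, j))
  refine ⟨k, fun j i => a i j, fun j i => haR i j, ?_⟩
  intro g hg
  have key : s • ∑ i, lam i • g i = ∑ j, mu j • ∑ i, a i j • g i := by
    calc s • ∑ i, lam i • g i
        = ∑ i, ∑ j, mu j • (a i j • g i) := by
          rw [Finset.smul_sum]
          refine Finset.sum_congr rfl fun i _ => ?_
          rw [hrep i, Finset.sum_smul, Finset.smul_sum]
          refine Finset.sum_congr rfl fun j _ => ?_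
          rw [smul_smul, smul_smul]
          congr 1
          simp only [ha]
          ring
      _ = ∑ j, ∑ i, mu j • (a i j • g i) := Finset.sum_comm
      _ = ∑ j, mu j • ∑ i, a i j • g i := by
          refine Finset.sum_congr rfl fun j _ => ?_
          rw [Finset.smul_sum]
  constructor
  · intro h0 j
    have hz : ∑ j, mu j • ∑ i, a i j • g i = 0 := by rw [← key, h0, smul_zero]
    exact hB k mu (fun j => ∑ i, a i j • g i) hmuind
      (fun j => AddSubgroup.sum_mem G (fun i _ => hGsmul _ (haR i j) _ (hg i))) hz j
  · intro h
    have : s • ∑ i, lam i • g i = 0 := by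
      rw [key]
      exact Finset.sum_eq_zero fun j _ => by rw [h j, smul_zero]
    rcases smul_eq_zero.mp this with h' | h'
    · exact absurd h' hs0
    · exact h'
end

section
/- Let F be a field, R a subring of F, K = Frac(R) viewed as a subfield of F, V an F-vector space, and H ⊆ V a family of vectors that is linearly independent over F. Let G = span_R(H) be the R-submodule of V generated by H. If λ₁,…,λ_k ∈ F are linearly independent over K and g₁,…,g_k ∈ G satisfy λ₁g₁ + ⋯ + λ_k g_k = 0, then g₁ = ⋯ = g_k = 0. -/
theorem stmt3 {F V : Type*} [Field F] [AddCommGroup V] [Module F V]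
    (R : Subring F) (K : Subfield F)
    (hK : ∀ x : F, x ∈ K ↔ ∃ r ∈ R, ∃ s ∈ R, s ≠ 0 ∧ x = r / s)
    (H : Set V) (hH : LinearIndependent F ((↑) : H → V))
    (k : ℕ) (lam : Fin k → F)
    (hlam : ∀ c : Fin k → F, (∀ i, c i ∈ K) → ∑ i, c i * lam i = 0 → ∀ i, c i = 0)
    (g : Fin k → V)
    (hg : ∀ i, ∃ (m : ℕ) (r : Fin m → F) (h : Fin m → V),
      (∀ j, r j ∈ R) ∧ (∀ j, h j ∈ H) ∧ g i = ∑ j, r j • h j)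
    (hsum : ∑ i, lam i • g i = 0) : ∀ i, g i = 0 := by
  classical
  choose m r h hr hh hgi using hg
  set c : Fin k → (V →₀ F) := fun i => ∑ j, Finsupp.single (h i j) (r i j) with hc
  have htot : ∀ i, Finsupp.linearCombination F (id : V → V) (c i) = g i := by
    intro i
    rw [hgi i, hc]
    simp [map_sum]
  have hsupp : ∀ i v, v ∈ (c i).support → v ∈ H := by
    intro i v hv
    have hv := Finsupp.support_finset_sum (s := Finset.univ) (f := fun j => Finsupp.single (h i j) (r i j)) hv
    simp only [Finset.mem_biUnion] at hv
    obtain ⟨j, -, hj⟩ := hv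
    have := Finsupp.support_single_subset hj
    simp only [Finset.mem_singleton] at this
    exact this ▸ hh i j
  have hmem : ∀ i v, c i v ∈ R := by
    intro i v
    rw [hc]
    simp only [Finsupp.finset_sum_apply, Finsupp.single_apply]
    exact Subring.sum_mem R fun j _ => by split <;> simp [hr, Subring.zero_mem]
  set d : V →₀ F := ∑ i, lam i • c i with hd
  have hd0 : d = 0 := by
    refine linearIndepOn_iff.mp (linearIndependent_subtype_iff.mp hH) d ?_ ?_
    · intro v hv
      have := Finsupp.support_finset_sum (s := Finset.univ) (f := fun i => lam i • c i) hv
      simp only [Finset.mem_biUnion] at this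
      obtain ⟨i, -, hi⟩ := this
      exact hsupp i v (Finsupp.support_smul hi)
    · rw [hd, map_sum]
      simpa [htot] using hsum
  have hcv : ∀ v : V, ∀ i, c i v = 0 := by
    intro v
    refine hlam (fun i => c i v) (fun i => (hK _).mpr ⟨c i v, hmem i v, 1, R.one_mem, one_ne_zero, by simp⟩) ?_
    have : d v = 0 := by rw [hd0]; rfl
    rw [hd] at this
    simpa [Finsupp.finset_sum_apply, mul_comm] using this
  intro i
  rw [← htot i]
  have : c i = 0 := Finsupp.ext fun v => hcv v i
  rw [this, map_zero]
end

section
/- Let M be an R-module with submodules V₀, V₁, V₂, U₁, U₂, U₀ such that U₁ ≤ V₁, U₂ ≤ V₂, V₁ ∩ V₂ = V₀, U₂ ∩ V₀ ≤ U₀, and U₀ ≤ U₁. Then V₁ ∩ (U₁ + U₂) = U₁ + (V₁ ∩ U₂), and consequently V₁ ∩ (U₁ + U₂) = U₁. -/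
theorem stmt4 {R M : Type*} [Ring R] [AddCommGroup M] [Module R M]
    (V₀ V₁ V₂ U₀ U₁ U₂ : Submodule R M)
    (hU₁ : U₁ ≤ V₁) (hU₂ : U₂ ≤ V₂) (hV : V₁ ⊓ V₂ = V₀)
    (h₂₀ : U₂ ⊓ V₀ ≤ U₀) (h₀₁ : U₀ ≤ U₁) :
    V₁ ⊓ (U₁ ⊔ U₂) = U₁ ⊔ (V₁ ⊓ U₂) ∧ V₁ ⊓ (U₁ ⊔ U₂) = U₁ := by
  have h1 : V₁ ⊓ (U₁ ⊔ U₂) = U₁ ⊔ (V₁ ⊓ U₂) := by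
    rw [inf_comm, sup_inf_assoc_of_le _ hU₁, inf_comm]
  have h2 : V₁ ⊓ U₂ ≤ U₁ := by
    calc V₁ ⊓ U₂ ≤ U₂ ⊓ V₀ := by
          rw [← hV]
          exact le_inf inf_le_right (le_inf inf_le_left (inf_le_right.trans hU₂))
      _ ≤ U₁ := h₂₀.trans h₀₁
  exact ⟨h1, by rw [h1, sup_eq_left.mpr h2]⟩
end

section
/- Let V be an abelian group with subgroups A, B, G. Then there exists a subset B₀ ⊆ B with cardinality at most the cardinality of A such that G ∩ (A + B) ⊆ (G ∩ (A + ⟨B₀⟩)) + (G ∩ B), where ⟨B₀⟩ is the subgroup generated by B₀. -/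
theorem stmt6 {V : Type*} [AddCommGroup V] (A B G : AddSubgroup V) :
    ∃ B₀ : Set V, B₀ ⊆ (B : Set V) ∧ Cardinal.mk B₀ ≤ Cardinal.mk (A : Set V) ∧
      ∀ x ∈ G, (∃ a ∈ A, ∃ b ∈ B, x = a + b) →
        ∃ y z : V, y ∈ G ∧ (∃ a ∈ A, ∃ c ∈ AddSubgroup.closure B₀, y = a + c) ∧
          z ∈ G ∧ z ∈ B ∧ x = y + z := by
  classical
  set S : Set V := {a | a ∈ A ∧ ∃ b ∈ B, a + b ∈ G} with hS
  have hch : ∀ a : S, ∃ b, b ∈ B ∧ (a : V) + b ∈ G := by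
    rintro ⟨a, _, b, hb, hab⟩; exact ⟨b, hb, hab⟩
  choose f hfB hfG using hch
  refine ⟨Set.range f, ?_, ?_, ?_⟩
  · rintro _ ⟨a, rfl⟩; exact hfB a
  · calc Cardinal.mk (Set.range f) ≤ Cardinal.mk S := Cardinal.mk_range_le
      _ ≤ Cardinal.mk (A : Set V) := Cardinal.mk_le_mk_of_subset (fun a ha => ha.1)
  · rintro x hxG ⟨a, haA, b, hbB, rfl⟩
    have haS : a ∈ S := ⟨haA, b, hbB, hxG⟩
    refine ⟨a + f ⟨a, haS⟩, b - f ⟨a, haS⟩, hfG ⟨a, haS⟩,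
      ⟨a, haA, f ⟨a, haS⟩, AddSubgroup.subset_closure ⟨⟨a, haS⟩, rfl⟩, rfl⟩,
      ?_, B.sub_mem hbB (hfB ⟨a, haS⟩), by abel⟩
    have := G.sub_mem hxG (hfG ⟨a, haS⟩)
    convert this using 1; abel
end

section
/- Let F be a field of characteristic 0, R ⊆ F a subring, V an F-vector space, and G an R-submodule of V. Let d ∈ ⋂_{s ∈ R, s ≠ 0} s•G (the R-divisible elements of G). Then for all r ∈ R, all a, g ∈ V, and all s₁,…,sₙ ∈ R with s₁ ≠ 0: r(a + d) + g ∈ s₁•G + ⋯ + sₙ•G if and only if ra + g ∈ s₁•G + ⋯ + sₙ•G. -/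
lemma sum_shift_aux {F V : Type*} [Field F] [AddCommGroup V] [Module F V]
    (n : ℕ) (s : Fin (n + 1) → F) (h : Fin (n + 1) → V) (c : V) :
    ∑ i, s i • (fun i => if i = 0 then h 0 + c else h i) i
      = (∑ i, s i • h i) + s 0 • c := by
  have key : ∀ i, s i • (if i = 0 then h 0 + c else h i)
      = s i • h i + (if i = 0 then s 0 • c else 0) := by
    intro i
    by_cases hi : i = 0
    · subst hi; simp [smul_add]
    · simp [hi]
  simp only [key, Finset.sum_add_distrib, Finset.sum_ite_eq', Finset.mem_univ, if_true]

theorem stmt7 {F V : Type*} [Field F] [CharZero F] [AddCommGroup V] [Module F V]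
    (R : Subring F) (G : AddSubgroup V) (hGsmul : ∀ r ∈ R, ∀ g ∈ G, r • g ∈ G)
    (d : V) (hd : ∀ s ∈ R, s ≠ 0 → ∃ g ∈ G, d = s • g)
    (r : F) (hr : r ∈ R) (a g : V) (n : ℕ) (s : Fin (n + 1) → F)
    (hs : ∀ i, s i ∈ R) (hs0 : s 0 ≠ 0) :
    ((∃ h : Fin (n + 1) → V, (∀ i, h i ∈ G) ∧ r • (a + d) + g = ∑ i, s i • h i) ↔
      (∃ h : Fin (n + 1) → V, (∀ i, h i ∈ G) ∧ r • a + g = ∑ i, s i • h i)) := by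
  obtain ⟨g0, hg0G, hg0⟩ := hd (s 0) (hs 0) hs0
  have hrg0 : r • g0 ∈ G := hGsmul r hr g0 hg0G
  have hrd : s 0 • (r • g0) = r • d := by
    rw [smul_comm, ← hg0]
  constructor
  · rintro ⟨h, hG, heq⟩
    refine ⟨fun i => if i = 0 then h 0 + (-(r • g0)) else h i, ?_, ?_⟩
    · intro i
      by_cases hi : i = 0
      · simp only [hi, if_true]; exact G.add_mem (hG 0) (G.neg_mem hrg0)
      · simpa [hi] using hG i
    · rw [sum_shift_aux, ← heq, smul_neg, hrd, smul_add]
      abel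
  · rintro ⟨h, hG, heq⟩
    refine ⟨fun i => if i = 0 then h 0 + r • g0 else h i, ?_, ?_⟩
    · intro i
      by_cases hi : i = 0
      · simp only [hi, if_true]; exact G.add_mem (hG 0) hrg0
      · simpa [hi] using hG i
    · rw [sum_shift_aux, ← heq, hrd, smul_add]
      abel
end

section
/- Let n ≥ 1 and let Y₀,…,Y_{2n}, Z₀,…,Z_{2n} be subsets of a set X. Suppose that for every set S of indices with |S| = n, both ⋂_{i∈S} Yᵢ and ⋂_{i∈S} Zᵢ are finite. Then ⋂_{i=0}^{2n} (Yᵢ ∪ Zᵢ) is finite. -/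
theorem stmt12 {X : Type*} (n : ℕ) (hn : 1 ≤ n)
    (Y Z : Fin (2 * n + 1) → Set X)
    (hfin : ∀ S : Finset (Fin (2 * n + 1)), S.card = n →
      (⋂ i ∈ S, Y i).Finite ∧ (⋂ i ∈ S, Z i).Finite) :
    (⋂ i, (Y i ∪ Z i)).Finite := by
  classical
  have hsub : (⋂ i, (Y i ∪ Z i)) ⊆
      ⋃ S ∈ (Finset.univ.powersetCard n : Finset (Finset (Fin (2 * n + 1)))),
        ((⋂ i ∈ S, Y i) ∪ (⋂ i ∈ S, Z i)) := by
    intro x hx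
    simp only [Set.mem_iInter] at hx
    set A := Finset.univ.filter (fun i => x ∈ Y i) with hA
    have hcard : A.card + Aᶜ.card = 2 * n + 1 := by
      rw [Finset.card_add_card_compl]; simp
    have h : n ≤ A.card ∨ n ≤ Aᶜ.card := by omega
    rcases h with h | h
    · obtain ⟨S, hSA, hScard⟩ := Finset.exists_subset_card_eq h
      refine Set.mem_iUnion₂.mpr ⟨S, ?_, ?_⟩
      · simp [Finset.mem_powersetCard, hScard]
      · left
        simp only [Set.mem_iInter]
        intro i hi
        have := hSA hi
        simp [hA] at this
        exact this
    · obtain ⟨S, hSA, hScard⟩ := Finset.exists_subset_card_eq h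
      refine Set.mem_iUnion₂.mpr ⟨S, ?_, ?_⟩
      · simp [Finset.mem_powersetCard, hScard]
      · right
        simp only [Set.mem_iInter]
        intro i hi
        have hiA := hSA hi
        simp [hA] at hiA
        rcases hx i with h' | h'
        · exact absurd h' hiA
        · exact h'
  refine Set.Finite.subset ?_ hsub
  refine Set.Finite.biUnion (Finset.univ.powersetCard n).finite_toSet ?_
  intro S hS
  simp only [Finset.mem_coe, Finset.mem_powersetCard] at hS
  obtain ⟨h1, h2⟩ := hfin S hS.2
  exact h1.union h2
end

section
/- Let F be a field of characteristic 0, R ⊆ F a subring, K = Frac(R) inside F, V an F-vector space, and G an R-submodule of V satisfying: whenever λ₁,…,λₙ ∈ F are K-linearly independent and g₁,…,gₙ ∈ G with Σλᵢgᵢ = 0, then all gᵢ = 0. Then for any λ₁,…,λₙ ∈ F (not necessarily independent) and g₁,…,gₙ ∈ G with λ₁g₁ + ⋯ + λₙgₙ = 0, there exist, after choosing a maximal K-independent subfamily λ₁,…,λ_m of the λᵢ (with each λⱼ for j > m a K-combination of these), elements r_{i,j} ∈ R, with r_{j,j} ≠ 0 for j ≤ m, such that for each j ≤ m: r_{j,j}gⱼ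 + Σ_{i=m+1}^{n} r_{i,j}gᵢ = 0. -/
theorem stmt15 {F V : Type*} [Field F] [CharZero F] [AddCommGroup V] [Module F V]
    (R : Subring F) (K : Subfield F)
    (hK : ∀ x : F, x ∈ K ↔ ∃ r ∈ R, ∃ s ∈ R, s ≠ 0 ∧ x = r / s)
    (G : AddSubgroup V) (hGsmul : ∀ r ∈ R, ∀ g ∈ G, r • g ∈ G)
    (hB : ∀ (k : ℕ) (lam : Fin k → F) (g : Fin k → V),
      (∀ c : Fin k → F, (∀ i, c i ∈ K) → ∑ i, c i * lam i = 0 → ∀ i, c i = 0) →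
      (∀ i, g i ∈ G) → ∑ i, lam i • g i = 0 → ∀ i, g i = 0)
    (n m : ℕ) (hm : m ≤ n) (lam : ℕ → F) (g : ℕ → V)
    (hg : ∀ i, g i ∈ G)
    (hsum : ∑ i ∈ Finset.range n, lam i • g i = 0)
    (hindep : ∀ c : ℕ → F, (∀ i < m, c i ∈ K) →
      ∑ i ∈ Finset.range m, c i * lam i = 0 → ∀ i < m, c i = 0)
    (hdep : ∀ j, m ≤ j → j < n → ∃ q : ℕ → F, (∀ i < m, q i ∈ K) ∧
      lam j = ∑ i ∈ Finset.range m, q i * lam i) :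
    ∃ r : ℕ → ℕ → F, (∀ i j, r i j ∈ R) ∧ (∀ j < m, r j j ≠ 0) ∧
      ∀ j < m, r j j • g j + ∑ i ∈ Finset.Ico m n, r i j • g i = 0 := by
  classical
  have hRK : ∀ x ∈ R, x ∈ K := by
    intro x hx
    exact (hK x).mpr ⟨x, hx, 1, R.one_mem, one_ne_zero, by simp⟩
  -- choose q
  have hdep' : ∀ j : ℕ, ∃ q : ℕ → F,
      m ≤ j → j < n → (∀ i < m, q i ∈ K) ∧ lam j = ∑ i ∈ Finset.range m, q i * lam i := by
    intro j
    by_cases h : m ≤ j ∧ j < n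
    · obtain ⟨q, hq1, hq2⟩ := hdep j h.1 h.2
      exact ⟨q, fun _ _ => ⟨hq1, hq2⟩⟩
    · exact ⟨0, fun h1 h2 => absurd ⟨h1, h2⟩ h⟩
  choose q hq using hdep'
  -- choose numerators and denominators
  have hrep : ∀ j i : ℕ, ∃ a s : F, a ∈ R ∧ s ∈ R ∧ s ≠ 0 ∧
      (m ≤ j → j < n → i < m → q j i = a / s) := by
    intro j i
    by_cases h : (m ≤ j ∧ j < n) ∧ i < m
    · have hK' := (hq j h.1.1 h.1.2).1 i h.2
      rw [hK] at hK'
      obtain ⟨a, ha, s, hs, hs0, heq⟩ := hK'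
      exact ⟨a, s, ha, hs, hs0, fun _ _ _ => heq⟩
    · exact ⟨0, 1, R.zero_mem, R.one_mem, one_ne_zero,
        fun h1 h2 h3 => absurd ⟨⟨h1, h2⟩, h3⟩ h⟩
  choose a s ha hs hs0 hqeq using hrep
  set d : ℕ → F := fun i => ∏ j ∈ Finset.Ico m n, s j i with hd
  have hdR : ∀ i, d i ∈ R := fun i => prod_mem fun j _ => hs j i
  have hd0 : ∀ i, d i ≠ 0 := fun i =>
    Finset.prod_ne_zero_iff.mpr fun j _ => hs0 j i
  have hdq : ∀ j ∈ Finset.Ico m n, ∀ i < m, d i * q j i ∈ R := by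
    intro j hj i hi
    have hj' := Finset.mem_Ico.mp hj
    have hdd : d i = s j i * ∏ k ∈ (Finset.Ico m n).erase j, s k i :=
      (Finset.mul_prod_erase _ _ hj).symm
    rw [hqeq j i hj'.1 hj'.2 hi, hdd]
    have heq : s j i * (∏ k ∈ (Finset.Ico m n).erase j, s k i) * (a j i / s j i)
        = a j i * ∏ k ∈ (Finset.Ico m n).erase j, s k i := by
      rw [mul_right_comm, ← mul_div_assoc, mul_div_cancel_left₀ _ (hs0 j i), mul_comm]
    rw [heq]
    exact R.mul_mem (ha j i) (prod_mem fun k _ => hs k i)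
  set hvec : ℕ → V := fun i =>
    d i • g i + ∑ j ∈ Finset.Ico m n, (d i * q j i) • g j with hhvec
  have hvecG : ∀ i < m, hvec i ∈ G := by
    intro i hi
    exact G.add_mem (hGsmul _ (hdR i) _ (hg i))
      (AddSubgroup.sum_mem G fun j hj => hGsmul _ (hdq j hj i hi) _ (hg j))
  -- the key sum identity
  have hsum' : ∑ i ∈ Finset.range m, (lam i / d i) • hvec i = 0 := by
    have e1 : ∀ i, (lam i / d i) • hvec i
        = lam i • g i + ∑ j ∈ Finset.Ico m n, (lam i * q j i) • g j := by
      intro i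
      simp only [hhvec, smul_add, Finset.smul_sum, smul_smul]
      congr 1
      · congr 1
        exact div_mul_cancel₀ _ (hd0 i)
      · refine Finset.sum_congr rfl fun j _ => ?_
        congr 1
        rw [← mul_assoc, div_mul_cancel₀ _ (hd0 i)]
    calc ∑ i ∈ Finset.range m, (lam i / d i) • hvec i
        = ∑ i ∈ Finset.range m, (lam i • g i
            + ∑ j ∈ Finset.Ico m n, (lam i * q j i) • g j) :=
          Finset.sum_congr rfl fun i _ => e1 i
      _ = (∑ i ∈ Finset.range m, lam i • g i)
            + ∑ j ∈ Finset.Ico m n, ∑ i ∈ Finset.range m, (lam i * q j i) • g j := by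
          rw [Finset.sum_add_distrib, Finset.sum_comm]
      _ = (∑ i ∈ Finset.range m, lam i • g i)
            + ∑ j ∈ Finset.Ico m n, lam j • g j := by
          congr 1
          refine Finset.sum_congr rfl fun j hj => ?_
          have hj' := Finset.mem_Ico.mp hj
          rw [← Finset.sum_smul]
          congr 1
          rw [(hq j hj'.1 hj'.2).2]
          refine Finset.sum_congr rfl fun i _ => mul_comm _ _
      _ = ∑ i ∈ Finset.range n, lam i • g i := by
          rw [Finset.range_eq_Ico, Finset.range_eq_Ico, ← Finset.sum_Ico_consecutive _ (Nat.zero_le m) hm]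
      _ = 0 := hsum
  -- apply axiom (B)
  have hzero : ∀ i : Fin m, hvec (i : ℕ) = 0 := by
    apply hB m (fun i : Fin m => lam i / d i) (fun i : Fin m => hvec i)
    · intro c hc hc0 i
      set c' : ℕ → F := fun i => if h : i < m then c ⟨i, h⟩ / d i else 0 with hc'
      have h1 : ∀ i < m, c' i ∈ K := by
        intro i hi
        simp only [hc', dif_pos hi]
        exact K.div_mem (hc ⟨i, hi⟩) (hRK _ (hdR i))
      have h2 : ∑ i ∈ Finset.range m, c' i * lam i = 0 := by
        rw [Finset.sum_range fun i => c' i * lam i]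
        rw [← hc0]
        refine Finset.sum_congr rfl fun i _ => ?_
        simp only [hc', dif_pos i.isLt, Fin.eta]
        field_simp
      have h3 := hindep c' h1 h2 i i.isLt
      simp only [hc', dif_pos i.isLt, Fin.eta] at h3
      rcases div_eq_zero_iff.mp h3 with h | h
      · exact h
      · exact absurd h (hd0 i)
    · intro i
      exact hvecG i i.isLt
    · rw [Fin.sum_univ_eq_sum_range (fun i => (lam i / d i) • hvec i) m]
      exact hsum'
  -- construct r
  refine ⟨fun i j => if j < m then (if i = j then d j
      else if m ≤ i ∧ i < n then d j * q i j else 0) else 0, ?_, ?_, ?_⟩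
  · intro i j
    by_cases hj : j < m
    · simp only [if_pos hj]
      by_cases hij : i = j
      · simp only [if_pos hij]; exact hdR j
      · simp only [if_neg hij]
        by_cases hi : m ≤ i ∧ i < n
        · simp only [if_pos hi]
          exact hdq i (Finset.mem_Ico.mpr hi) j hj
        · simp only [if_neg hi]; exact R.zero_mem
    · simp only [if_neg hj]; exact R.zero_mem
  · intro j hj
    simp only [if_pos hj, if_pos rfl]
    exact hd0 j
  · intro j hj
    have key := hzero ⟨j, hj⟩
    simp only [hhvec] at key
    have e2 : ∀ i ∈ Finset.Ico m n,
        (if j < m then (if i = j then d j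
          else if m ≤ i ∧ i < n then d j * q i j else 0) else 0) • g i
        = (d j * q i j) • g i := by
      intro i hi
      have hi' := Finset.mem_Ico.mp hi
      have hij : i ≠ j := fun h => absurd (h ▸ hi'.1) (Nat.not_le.mpr hj)
      rw [if_pos hj, if_neg hij, if_pos hi']
    rw [Finset.sum_congr rfl e2]
    simp only [if_pos hj, if_pos rfl]
    exact key
end
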